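/- arXiv:1503.04933 — 5 statements merged into one kernel-verified Lean document; each statement's English description precedes it below -/
import Mathlib

section
/- For all integers n ≥ 0 and k ≥ 1, the poly-Bernoulli number of negative index satisfies B_n^{(-k)} = Σ_{l=1}^{k} (-1)^{l+k} · l! · S(k,l) · (l+1)^n, where S(k,l) denotes the Stirling number of the second kind. -/
open Finset

/-- Stirling numbers of the second kind. -/
def S2 : ℕ → ℕ → ℕ
  | 0, 0 => 1
  | 0, _ + 1 => 0
  | _ + 1, 0 => 0
  | n + 1, k + 1 => S2 n k + (k + 1) * S2 n (k + 1)

/-- Unsigned Stirling numbers of the first kind. -/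
def S1 : ℕ → ℕ → ℕ
  | 0, 0 => 1
  | 0, _ + 1 => 0
  | _ + 1, 0 => 0
  | n + 1, k + 1 => S1 n k + n * S1 n (k + 1)

/-- Poly-Bernoulli number of negative index `B_n^{(-k)}` (closed power-sum formula). -/
def polyB (n k : ℕ) : ℤ :=
  ∑ l ∈ Finset.Icc 1 k, (-1 : ℤ) ^ (l + k) * (Nat.factorial l) * S2 k l * ((l : ℤ) + 1) ^ n

/-- Rising factorial `(r)_l = r (r+1) ⋯ (r+l-1)`. -/
def risingFact (r l : ℕ) : ℕ := ∏ i ∈ Finset.range l, (r + i)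

/-!
Put `u n j = j! S(n+1, j+1)`. This is the `j`-th forward difference of `x ↦ (x+1)^n` at `0`,
so `u n j = ∑ i, (-1)^(j+i) C(j,i) (i+1)^n`. Expanding one factor of `u n j * u k j` this way
and exchanging the sums reduces the theorem to
`∑ j, (-1)^(j+i) C(j,i) u k j = (-1)^(k+i) i! S(k,i)`, which follows by induction on `k` from
the recurrence of `S` and Pascal's rule.
-/

open Nat

theorem S2_eq_stirlingSecond : ∀ n k, S2 n k = stirlingSecond n k
  | 0, 0 => rfl
  | 0, _ + 1 => rfl
  | _ + 1, 0 => rfl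
  | n + 1, k + 1 => by
    rw [S2, stirlingSecond_succ_succ, S2_eq_stirlingSecond n k, S2_eq_stirlingSecond n (k + 1),
      add_comm]

namespace Nat

theorem factorial_mul_stirlingSecond_succ_succ (n j : ℕ) :
    ((j + 1)! * stirlingSecond (n + 2) (j + 2) : ℤ) =
      (j + 1) * (j ! * stirlingSecond (n + 1) (j + 1)) +
        (j + 2) * ((j + 1)! * stirlingSecond (n + 1) (j + 2)) := by
  rw [stirlingSecond_succ_succ (n + 1) (j + 1), factorial_succ]
  push_cast
  ring

theorem factorial_mul_stirlingSecond_succ_eq_sum (n j : ℕ) :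
    (j ! * stirlingSecond (n + 1) (j + 1) : ℤ) =
      ∑ i ∈ range (j + 1), (-1) ^ (j + i) * j.choose i * ((i : ℤ) + 1) ^ n := by
  induction n generalizing j with
  | zero =>
    simp_rw [pow_zero, mul_one, pow_add, mul_assoc, ← mul_sum, Int.alternating_sum_range_choose]
    cases j <;> simp [stirlingSecond_eq_zero_of_lt, stirlingSecond_one_right]
  | succ n ih =>
    cases j with
    | zero => simp [stirlingSecond_one_right]
    | succ c =>
      have hpascal (i : ℕ) : ((c + 2) * (c + 1).choose i : ℤ) =
          (i + 1) * (c + 1).choose i + (c + 1) * c.choose i := by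
        have h : (c + 2) * (c + 1).choose i =
            (i + 1) * (c + 1).choose i + (c + 1) * c.choose i := by
          rw [add_one_mul_choose_eq, add_one_mul_choose_eq, choose_succ_succ (c + 1)]
          ring
        exact_mod_cast h
      have hext : ∑ i ∈ range (c + 1), (-1 : ℤ) ^ (c + i) * c.choose i * ((i : ℤ) + 1) ^ n =
          ∑ i ∈ range (c + 2), (-1 : ℤ) ^ (c + i) * c.choose i * ((i : ℤ) + 1) ^ n := by
        simp [sum_range_succ _ (c + 1)]
      rw [factorial_mul_stirlingSecond_succ_succ, ih, ih, hext, mul_sum, mul_sum,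
        ← sum_add_distrib]
      refine sum_congr rfl fun i _ => ?_
      linear_combination (-1 : ℤ) ^ (c + 1 + i) * ((i : ℤ) + 1) ^ n * hpascal i

theorem sum_range_alternating_choose_mul_factorial_mul_stirlingSecond (k b : ℕ) :
    ∑ j ∈ range (k + 1),
        (-1 : ℤ) ^ (j + b) * j.choose b * (j ! * stirlingSecond (k + 1) (j + 1)) =
      (-1) ^ (k + b) * (b ! * stirlingSecond k b) := by
  induction k generalizing b with
  | zero => cases b <;> simp [stirlingSecond_one_right]
  | succ k ih =>
    have hrec (j : ℕ) :
        (-1 : ℤ) ^ (j + b) * j.choose b * (j ! * stirlingSecond (k + 2) (j + 1)) =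
          (-1) ^ (j + b) * j.choose b * ((j + 1) * (j ! * stirlingSecond (k + 1) (j + 1))) +
            (-1) ^ (j + b) * j.choose b * (j ! * stirlingSecond (k + 1) j) := by
      rw [stirlingSecond_succ_succ]
      push_cast
      ring
    have hshift : ∑ j ∈ range (k + 2),
          (-1 : ℤ) ^ (j + b) * j.choose b * (j ! * stirlingSecond (k + 2) (j + 1)) =
        ∑ j ∈ range (k + 1), (-1 : ℤ) ^ (j + b) * (j.choose b - (j + 1).choose b) * (j + 1) *
          (j ! * stirlingSecond (k + 1) (j + 1)) := by
      rw [sum_congr rfl fun j _ => hrec j, sum_add_distrib, sum_range_succ _ (k + 1),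
        sum_range_succ' _ (k + 1), stirlingSecond_eq_zero_of_lt (by omega : k + 1 < k + 2)]
      simp only [stirlingSecond_succ_zero, Nat.cast_zero, mul_zero, add_zero, ← sum_add_distrib]
      refine sum_congr rfl fun j _ => ?_
      push_cast [factorial_succ]
      ring
    rw [hshift]
    cases b with
    | zero => simp
    | succ c =>
      have hsummand (j : ℕ) : (-1 : ℤ) ^ (j + (c + 1)) *
            (j.choose (c + 1) - (j + 1).choose (c + 1)) * (j + 1) *
            (j ! * stirlingSecond (k + 1) (j + 1)) =
          (c + 1) * ((-1) ^ (j + c) * j.choose c * (j ! * stirlingSecond (k + 1) (j + 1)) -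
            (-1) ^ (j + (c + 1)) * j.choose (c + 1) * (j ! * stirlingSecond (k + 1) (j + 1))) := by
        have hpascal : ((j + 1).choose (c + 1) : ℤ) = j.choose c + j.choose (c + 1) := by
          exact_mod_cast choose_succ_succ j c
        have habsorb : ((j + 1) * j.choose c : ℤ) = (j + 1).choose (c + 1) * (c + 1) := by
          exact_mod_cast add_one_mul_choose_eq j c
        linear_combination (-1 : ℤ) ^ (j + (c + 1)) * (j ! * stirlingSecond (k + 1) (j + 1)) *
          ((-(j : ℤ) - c - 2) * hpascal - habsorb)
      rw [sum_congr rfl fun j _ => hsummand j,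
        ← mul_sum, sum_sub_distrib, ih c, ih (c + 1), stirlingSecond_succ_succ k c]
      push_cast [factorial_succ]
      ring

theorem factorial_mul_stirlingSecond_succ_eq_sum_of_le (n : ℕ) {j m : ℕ} (h : j ≤ m) :
    (j ! * stirlingSecond (n + 1) (j + 1) : ℤ) =
      ∑ i ∈ range (m + 1), (-1) ^ (j + i) * j.choose i * ((i : ℤ) + 1) ^ n := by
  rw [factorial_mul_stirlingSecond_succ_eq_sum]
  refine sum_subset (range_subset_range.2 (by omega)) fun i _ hi => ?_
  rw [choose_eq_zero_of_lt (by simpa using hi), Nat.cast_zero, mul_zero, zero_mul]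

end Nat

theorem stmt_0 (n k : ℕ) (hk : 1 ≤ k) :
    (∑ j ∈ Finset.range (min n k + 1),
        ((Nat.factorial j : ℤ)) ^ 2 * S2 (n + 1) (j + 1) * S2 (k + 1) (j + 1)) =
      ∑ l ∈ Finset.Icc 1 k,
        (-1 : ℤ) ^ (l + k) * (Nat.factorial l) * S2 k l * ((l : ℤ) + 1) ^ n := by
  simp only [S2_eq_stirlingSecond]
  calc _ = ∑ j ∈ range (min n k + 1), (j ! * stirlingSecond (n + 1) (j + 1) : ℤ) *
        (j ! * stirlingSecond (k + 1) (j + 1)) := sum_congr rfl fun j _ => by ring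
    _ = ∑ j ∈ range (k + 1), (j ! * stirlingSecond (n + 1) (j + 1) : ℤ) *
        (j ! * stirlingSecond (k + 1) (j + 1)) := by
        refine sum_subset (range_subset_range.2 (by omega)) fun j hj hjn => ?_
        rw [stirlingSecond_eq_zero_of_lt (by simp only [mem_range] at hj hjn; omega)]
        ring
    _ = ∑ j ∈ range (k + 1), ∑ i ∈ range (k + 1), ((i : ℤ) + 1) ^ n *
          ((-1) ^ (j + i) * j.choose i * (j ! * stirlingSecond (k + 1) (j + 1))) := by
        refine sum_congr rfl fun j hj => ?_
        rw [factorial_mul_stirlingSecond_succ_eq_sum_of_le n (mem_range_succ_iff.1 hj), sum_mul]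
        exact sum_congr rfl fun i _ => by ring
    _ = ∑ i ∈ range (k + 1),
          ((i : ℤ) + 1) ^ n * ((-1) ^ (k + i) * (i ! * stirlingSecond k i)) := by
        rw [sum_comm]
        simp only [← mul_sum, sum_range_alternating_choose_mul_factorial_mul_stirlingSecond]
    _ = _ := by
        have hsub : Icc 1 k ⊆ range (k + 1) := fun i hi => by
          simp only [mem_Icc, mem_range] at hi ⊢
          omega
        rw [← sum_subset hsub fun i hik hi => ?_]
        · exact sum_congr rfl fun i _ => by ring
        · obtain rfl : i = 0 := by simp only [mem_range, mem_Icc] at hik hi; omega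
          obtain ⟨k, rfl⟩ := Nat.exists_eq_add_of_le' hk
          simp
end

section
/- For integers r ≥ 1 and n ≥ 0, (1/r!) · Σ_{k=1}^{r} c(r,k) · B_n^{(-k)} = (r+1)^n, where c(r,k) is the unsigned Stirling number of the first kind and B_n^{(-k)} = Σ_{l=1}^{k} (-1)^{l+k} l! S(k,l) (l+1)^n. -/
open Finset

lemma S2_zero_of_lt : ∀ {k l : ℕ}, k < l → S2 k l = 0
  | 0, _ + 1, _ => rfl
  | k + 1, l + 1, h => by
    have h1 : k < l := Nat.lt_of_succ_lt_succ h
    have h2 : k < l + 1 := Nat.lt_succ_of_lt h1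
    simp [S2, S2_zero_of_lt h1, S2_zero_of_lt h2]

lemma S1_zero_of_lt : ∀ {r k : ℕ}, r < k → S1 r k = 0
  | 0, _ + 1, _ => rfl
  | r + 1, k + 1, h => by
    have h1 : r < k := Nat.lt_of_succ_lt_succ h
    have h2 : r < k + 1 := Nat.lt_succ_of_lt h1
    simp [S1, S1_zero_of_lt h1, S1_zero_of_lt h2]

/-- The inversion sum. -/
def Ainv (r l : ℕ) : ℚ := ∑ k ∈ Finset.range (r + 1), (-1 : ℚ) ^ k * S1 r k * S2 k l

lemma Ainv_succ (r l : ℕ) :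
    Ainv (r + 1) l =
      (∑ k ∈ Finset.range (r + 1), (-1 : ℚ) ^ (k + 1) * S1 r k * S2 (k + 1) l)
        + r * Ainv r l := by
  have h0 : Ainv (r + 1) l = ∑ k ∈ Finset.range (r + 1),
      (-1 : ℚ) ^ (k + 1) * S1 (r + 1) (k + 1) * S2 (k + 1) l := by
    rw [Ainv, Finset.sum_range_succ']
    simp [S1]
  have h1 : ∀ k, ((S1 (r + 1) (k + 1) : ℚ)) = S1 r k + r * S1 r (k + 1) := by
    intro k
    rw [show S1 (r + 1) (k + 1) = S1 r k + r * S1 r (k + 1) from rfl]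
    push_cast; ring
  have h2 : (Ainv (r + 1) l) =
      (∑ k ∈ Finset.range (r + 1), (-1 : ℚ) ^ (k + 1) * S1 r k * S2 (k + 1) l)
        + r * ∑ k ∈ Finset.range (r + 1), (-1 : ℚ) ^ (k + 1) * S1 r (k + 1) * S2 (k + 1) l := by
    rw [h0, Finset.mul_sum, ← Finset.sum_add_distrib]
    refine Finset.sum_congr rfl fun k _ => ?_
    rw [h1]; ring
  rw [h2]
  congr 1
  -- r * second = r * Ainv r l
  have hsec : ∑ k ∈ Finset.range (r + 1), (-1 : ℚ) ^ (k + 1) * S1 r (k + 1) * S2 (k + 1) l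
      = Ainv r l - (S1 r 0 : ℚ) * S2 0 l := by
    have := Finset.sum_range_succ' (fun k => (-1 : ℚ) ^ k * S1 r k * S2 k l) r
    -- Ainv r l = Σ_{k∈range r} g (k+1) + g 0
    have hlast : ((-1 : ℚ) ^ (r + 1) * S1 r (r + 1) * S2 (r + 1) l) = 0 := by
      rw [S1_zero_of_lt (Nat.lt_succ_self r)]; push_cast; ring
    rw [Finset.sum_range_succ, hlast, add_zero]
    rw [Ainv, this]

    ring
  rw [hsec]
  rcases Nat.eq_zero_or_pos r with h | h
  · subst h; simp
  · have : S1 r 0 = 0 := by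
      cases r with
      | zero => omega
      | succ m => rfl
    rw [this]; push_cast; ring

lemma Ainv_eq : ∀ (r l : ℕ), Ainv r l = if r = l then (-1 : ℚ) ^ r else 0
  | 0, l => by
    cases l with
    | zero => simp [Ainv, S1, S2]
    | succ m => simp [Ainv, S1, S2, S2_zero_of_lt (Nat.succ_pos m)]
  | r + 1, l => by
    rw [Ainv_succ]
    cases l with
    | zero =>
      have hz : ∀ k, S2 (k + 1) 0 = 0 := fun k => rfl
      simp only [hz, Nat.cast_zero, mul_zero, Finset.sum_const_zero, zero_add]
      rw [Ainv_eq r 0]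
      rcases Nat.eq_zero_or_pos r with h | h
      · subst h; simp
      · simp [(by omega : r ≠ 0), (by omega : r + 1 ≠ 0)]
    | succ m =>
      have hrec : ∀ k, ((S2 (k + 1) (m + 1) : ℚ)) = S2 k m + (m + 1) * S2 k (m + 1) := by
        intro k
        rw [show S2 (k + 1) (m + 1) = S2 k m + (m + 1) * S2 k (m + 1) from rfl]
        push_cast; ring
      have hsum : (∑ k ∈ Finset.range (r + 1), (-1 : ℚ) ^ (k + 1) * S1 r k * S2 (k + 1) (m + 1))
          = -Ainv r m - (m + 1) * Ainv r (m + 1) := by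
        have hterm : ∀ k ∈ Finset.range (r + 1),
            (-1 : ℚ) ^ (k + 1) * S1 r k * S2 (k + 1) (m + 1)
              = -((-1 : ℚ) ^ k * S1 r k * S2 k m)
                - ((m : ℚ) + 1) * ((-1 : ℚ) ^ k * S1 r k * S2 k (m + 1)) := by
          intro k _; rw [hrec]; ring
        rw [Finset.sum_congr rfl hterm, Finset.sum_sub_distrib, Finset.sum_neg_distrib,
          ← Finset.mul_sum, Ainv, Ainv]
      rw [hsum, Ainv_eq r m, Ainv_eq r (m + 1)]
      by_cases ha : r = m
      · rw [if_pos ha, if_neg (by omega : ¬ r = m + 1), if_pos (by omega : r + 1 = m + 1)]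
        ring
      · by_cases hb : r = m + 1
        · rw [if_neg ha, if_pos hb, if_neg (by omega : ¬ r + 1 = m + 1), hb]
          push_cast; ring
        · rw [if_neg ha, if_neg hb, if_neg (by omega : ¬ r + 1 = m + 1)]
          ring

theorem stmt_7 (r n : ℕ) (hr : 1 ≤ r) :
    (1 / (Nat.factorial r : ℚ)) *
        ∑ k ∈ Finset.Icc 1 r, (S1 r k : ℚ) * (polyB n k : ℚ) =
      ((r : ℚ) + 1) ^ n := by
  classical
  have hS2zero : ∀ l, 1 ≤ l → S2 0 l = 0 := by
    intro l hl
    cases l with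
    | zero => omega
    | succ m => rfl
  have key : ∀ l, 1 ≤ l →
      (∑ k ∈ Finset.Icc 1 r, (-1 : ℚ) ^ (l + k) * S1 r k * S2 k l)
        = if l = r then 1 else 0 := by
    intro l hl
    have hins : Finset.range (r + 1) = insert 0 (Finset.Icc 1 r) := by
      ext x; simp [Finset.mem_range, Finset.mem_Icc]; omega
    have hA : Ainv r l = ∑ k ∈ Finset.Icc 1 r, (-1 : ℚ) ^ k * S1 r k * S2 k l := by
      rw [Ainv, hins, Finset.sum_insert (by simp)]
      rw [hS2zero l hl]
      simp
    have hsplit : (∑ k ∈ Finset.Icc 1 r, (-1 : ℚ) ^ (l + k) * S1 r k * S2 k l)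
        = (-1 : ℚ) ^ l * Ainv r l := by
      rw [hA, Finset.mul_sum]
      refine Finset.sum_congr rfl fun k _ => ?_
      rw [pow_add]; ring
    rw [hsplit, Ainv_eq]
    by_cases h : r = l
    · subst h
      rw [if_pos rfl, if_pos rfl, ← pow_add, ← two_mul, pow_mul]
      norm_num
    · rw [if_neg h, if_neg (fun hh => h hh.symm), mul_zero]
  have hpoly : ∀ k, ((polyB n k : ℤ) : ℚ)
      = ∑ l ∈ Finset.Icc 1 k,
          (-1 : ℚ) ^ (l + k) * (Nat.factorial l : ℚ) * S2 k l * ((l : ℚ) + 1) ^ n := by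
    intro k
    rw [polyB]
    push_cast
    rfl
  have hext : ∀ k ∈ Finset.Icc 1 r,
      (S1 r k : ℚ) * (polyB n k : ℚ)
        = ∑ l ∈ Finset.Icc 1 r, (S1 r k : ℚ) *
            ((-1 : ℚ) ^ (l + k) * (Nat.factorial l : ℚ) * S2 k l * ((l : ℚ) + 1) ^ n) := by
    intro k hk
    rw [hpoly, Finset.mul_sum]
    apply Finset.sum_subset (Finset.Icc_subset_Icc_right (Finset.mem_Icc.mp hk).2)
    intro l hl hnl
    have hlt : k < l := by
      simp only [Finset.mem_Icc] at hl hnl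
      omega
    rw [S2_zero_of_lt hlt]
    push_cast
    ring
  rw [Finset.sum_congr rfl hext, Finset.sum_comm]
  have hinner : ∀ l ∈ Finset.Icc 1 r,
      (∑ k ∈ Finset.Icc 1 r, (S1 r k : ℚ) *
          ((-1 : ℚ) ^ (l + k) * (Nat.factorial l : ℚ) * S2 k l * ((l : ℚ) + 1) ^ n))
        = if l = r then (Nat.factorial r : ℚ) * ((r : ℚ) + 1) ^ n else 0 := by
    intro l hl
    have hl1 : 1 ≤ l := (Finset.mem_Icc.mp hl).1
    have hpull : (∑ k ∈ Finset.Icc 1 r, (S1 r k : ℚ) *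
          ((-1 : ℚ) ^ (l + k) * (Nat.factorial l : ℚ) * S2 k l * ((l : ℚ) + 1) ^ n))
        = ((Nat.factorial l : ℚ) * ((l : ℚ) + 1) ^ n) *
            ∑ k ∈ Finset.Icc 1 r, (-1 : ℚ) ^ (l + k) * S1 r k * S2 k l := by
      rw [Finset.mul_sum]
      exact Finset.sum_congr rfl fun k _ => by ring
    rw [hpull, key l hl1]
    by_cases h : l = r
    · subst h; simp
    · simp [h]
  rw [Finset.sum_congr rfl hinner, Finset.sum_ite_eq' (Finset.Icc 1 r) r]
  rw [if_pos (by simp [Finset.mem_Icc]; omega)]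
  have hfac : (Nat.factorial r : ℚ) ≠ 0 := by positivity
  field_simp
end

section
/- For integers r ≥ 1 and n ≥ 0, (1/(r-1)!) · Σ_{k=1}^{r} c(r,k) · B_n^{(-k)} = r·(r+1)^n, where c(r,k) is the unsigned Stirling number of the first kind and B_n^{(-k)} = Σ_{l=1}^{k} (-1)^{l+k} l! S(k,l) (l+1)^n. -/
open Finset

/-! The signed Stirling matrices of the two kinds are mutually inverse:
`∑ₖ (-1)^k c(r,k) S(k,l) = (-1)^r δ_{lr}`. Exchanging the order of summation in
`∑ₖ c(r,k) B_n^{(-k)}` therefore collapses the double sum to its term `l = r`, which is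
`r! (r+1)^n`; dividing by `(r-1)!` leaves `r (r+1)^n`. -/

theorem S1_eq_stirlingFirst : S1 = Nat.stirlingFirst := by
  funext r k
  induction r generalizing k with
  | zero => cases k <;> rfl
  | succ r ih =>
    cases k with
    | zero => rfl
    | succ k => rw [S1, Nat.stirlingFirst_succ_succ, ih, ih, add_comm]

theorem S2_eq_stirlingSecond_s8 : S2 = Nat.stirlingSecond := by
  funext r k
  induction r generalizing k with
  | zero => cases k <;> rfl
  | succ r ih =>
    cases k with
    | zero => rfl
    | succ k => rw [S2, Nat.stirlingSecond_succ_succ, ih, ih, add_comm]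

theorem Finset.sum_Icc_one_eq_sum_range {M : Type*} [AddCommMonoid M] {f : ℕ → M}
    (hf : f 0 = 0) (n : ℕ) : ∑ k ∈ Icc 1 n, f k = ∑ k ∈ range (n + 1), f k := by
  rw [sum_range_eq_add_Ico f n.add_one_pos, hf, zero_add, Ico_add_one_right_eq_Icc]

namespace Nat

variable {R : Type*} [CommRing R]

theorem sum_neg_one_pow_mul_stirlingFirst_mul_stirlingSecond (r l : ℕ) :
    ∑ k ∈ range (r + 1), (-1 : R) ^ k * stirlingFirst r k * stirlingSecond k l =
      if l = r then (-1) ^ r else 0 := by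
  induction r generalizing l with
  | zero => cases l <;> simp
  | succ r ih =>
    cases l with
    | zero =>
      refine sum_eq_zero fun k _ => ?_
      cases k <;> simp
    | succ m =>
      -- the boundary terms vanish: `c(r, r+1) = 0` and `S(0, m+1) = 0`
      have shift : ∑ k ∈ range (r + 1),
          (-1 : R) ^ (k + 1) * stirlingFirst r (k + 1) * stirlingSecond (k + 1) (m + 1) =
            ∑ k ∈ range (r + 1),
              (-1 : R) ^ k * stirlingFirst r k * stirlingSecond k (m + 1) := by
        rw [sum_range_succ, sum_range_succ' _ r, stirlingFirst_eq_zero_of_lt r.lt_add_one]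
        simp
      calc _ = ∑ k ∈ range (r + 1),
            (r * ((-1 : R) ^ (k + 1) * stirlingFirst r (k + 1) * stirlingSecond (k + 1) (m + 1)) -
              ((m + 1) * ((-1 : R) ^ k * stirlingFirst r k * stirlingSecond k (m + 1)) +
                (-1 : R) ^ k * stirlingFirst r k * stirlingSecond k m)) := by
            rw [sum_range_succ']
            simp only [stirlingFirst_succ_succ, stirlingSecond_succ_succ, stirlingFirst_succ_zero]
            push_cast
            simp only [mul_zero, zero_mul, add_zero]
            exact sum_congr rfl fun k _ => by ring
        _ = r * (if m + 1 = r then (-1) ^ r else 0) -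
              ((m + 1) * (if m + 1 = r then (-1) ^ r else 0) + if m = r then (-1) ^ r else 0) := by
            simp only [sum_sub_distrib, sum_add_distrib, ← mul_sum, shift, ih]
        _ = if m + 1 = r + 1 then (-1) ^ (r + 1) else 0 := by
            split_ifs <;> first | omega | (subst_vars; push_cast; ring)

theorem sum_stirlingFirst_mul_sum_stirlingSecond (g : ℕ → R) (r : ℕ) :
    ∑ k ∈ range (r + 1), (stirlingFirst r k : R) *
        ∑ l ∈ range (k + 1), (-1) ^ (l + k) * stirlingSecond k l * g l = g r := by
  have extend : ∀ k ∈ range (r + 1), (stirlingFirst r k : R) *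
      ∑ l ∈ range (k + 1), (-1) ^ (l + k) * stirlingSecond k l * g l =
        ∑ l ∈ range (r + 1),
          (-1) ^ l * g l * ((-1) ^ k * stirlingFirst r k * stirlingSecond k l) := by
    intro k hk
    rw [mul_sum]
    refine sum_subset_zero_on_sdiff (range_subset_range.2 (mem_range.1 hk)) (fun l hl => ?_)
      fun l _ => by ring
    rw [mem_sdiff, mem_range, mem_range, not_lt] at hl
    simp [stirlingSecond_eq_zero_of_lt hl.2]
  calc _ = ∑ l ∈ range (r + 1), (-1) ^ l * g l *
        ∑ k ∈ range (r + 1), (-1 : R) ^ k * stirlingFirst r k * stirlingSecond k l := by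
        rw [sum_congr rfl extend, sum_comm]
        simp only [mul_sum]
    _ = g r := by
        simp only [sum_neg_one_pow_mul_stirlingFirst_mul_stirlingSecond, mul_ite, mul_zero,
          sum_ite_eq', mem_range, r.lt_add_one, if_true]
        rw [mul_right_comm, ← mul_pow, neg_one_mul, neg_neg, one_pow, one_mul]

end Nat

theorem cast_polyB_eq_sum_range {R : Type*} [CommRing R] (n : ℕ) {k : ℕ} (hk : k ≠ 0) :
    (polyB n k : R) = ∑ l ∈ range (k + 1),
      (-1) ^ (l + k) * Nat.stirlingSecond k l * ((l.factorial : R) * ((l : R) + 1) ^ n) := by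
  rw [polyB, ← Finset.sum_Icc_one_eq_sum_range]
  · push_cast
    exact sum_congr rfl fun l _ => by rw [S2_eq_stirlingSecond_s8]; ring
  · obtain ⟨j, rfl⟩ := Nat.exists_eq_succ_of_ne_zero hk
    simp

theorem stmt_8 (r n : ℕ) (hr : 1 ≤ r) :
    (1 / (Nat.factorial (r - 1) : ℚ)) *
        ∑ k ∈ Finset.Icc 1 r, (S1 r k : ℚ) * (polyB n k : ℚ) =
      (r : ℚ) * ((r : ℚ) + 1) ^ n := by
  obtain ⟨m, rfl⟩ := Nat.exists_eq_add_of_le' hr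
  have inversion : ∑ k ∈ Icc 1 (m + 1), (S1 (m + 1) k : ℚ) * (polyB n k : ℚ) =
      (m + 1).factorial * ((m + 1 : ℕ) + 1 : ℚ) ^ n := by
    rw [← Nat.sum_stirlingFirst_mul_sum_stirlingSecond
        (fun l => (l.factorial : ℚ) * (l + 1) ^ n),
      ← Finset.sum_Icc_one_eq_sum_range (by simp), S1_eq_stirlingFirst]
    exact sum_congr rfl fun k hk => by
      rw [cast_polyB_eq_sum_range n (Nat.one_le_iff_ne_zero.1 (mem_Icc.1 hk).1)]
  rw [inversion, Nat.add_sub_cancel, Nat.factorial_succ]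
  push_cast
  field_simp
end

section
/- Define α_l^{(r,m)} for r ≥ 1, m ≥ 0, l ≥ 0 by: α_0^{(r,0)} = 1, α_l^{(r,0)} = 0 for l ≥ 1, and α_l^{(r,m+1)} = (l+r-1)·α_{l-1}^{(r,m)} - l·α_l^{(r,m)} (with α_{-1} understood as 0). Then for all m ≥ 1 and 1 ≤ l ≤ m, α_l^{(r,m)} = (-1)^{l+m} · (r)_l · S(m,l), where (r)_l = r(r+1)···(r+l-1) is the rising factorial and S is the Stirling number of the second kind. -/
open Finset

/-- Kamano's coefficients `α_l^{(r,m)}`: `alphaK r m l`. -/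
def alphaK (r : ℕ) : ℕ → ℕ → ℤ
  | 0, 0 => 1
  | 0, _ + 1 => 0
  | _ + 1, 0 => 0
  | m + 1, l + 1 => ((l : ℤ) + 1 + r - 1) * alphaK r m l - ((l : ℤ) + 1) * alphaK r m (l + 1)


lemma alphaK_eq (r : ℕ) : ∀ m l, alphaK r m l = (-1 : ℤ) ^ (l + m) * (risingFact r l) * S2 m l := by
  intro m
  induction m with
  | zero =>
    intro l
    cases l with
    | zero => simp [alphaK, S2, risingFact]
    | succ l => simp [alphaK, S2]
  | succ m ih =>
    intro l
    cases l with
    | zero => simp [alphaK, S2]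
    | succ l =>
      have hrf : (risingFact r (l + 1) : ℤ) = (risingFact r l : ℤ) * (r + l) := by
        simp [risingFact, Finset.prod_range_succ]
      show ((l : ℤ) + 1 + r - 1) * alphaK r m l - ((l : ℤ) + 1) * alphaK r m (l + 1) = _
      rw [ih l, ih (l + 1)]
      have hS2 : (S2 (m + 1) (l + 1) : ℤ) = S2 m l + (l + 1) * S2 m (l + 1) := by
        show ((S2 m l + (l + 1) * S2 m (l + 1) : ℕ) : ℤ) = _
        push_cast; ring
      rw [hS2, hrf]
      have h1 : (-1 : ℤ) ^ (l + 1 + m) = -(-1 : ℤ) ^ (l + m) := by ring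
      have h2 : (-1 : ℤ) ^ (l + 1 + (m + 1)) = (-1 : ℤ) ^ (l + m) := by ring
      rw [h1, h2]
      ring

theorem stmt_10 (r m l : ℕ) (hr : 1 ≤ r) (hm : 1 ≤ m) (hl : 1 ≤ l) (hlm : l ≤ m) :
    alphaK r m l = (-1 : ℤ) ^ (l + m) * (risingFact r l) * S2 m l := by
  exact alphaK_eq r m l
end

section
/- For integers k ≥ 1 and n ≥ 0, B_n^{(-k)} = Σ_{m=0}^{k-1} (-1)^{k-m-1} · binom(k-1,m) · B_n^{(0,-m)}, where B_n^{(0,-m)} = Σ_{l=1}^{m} (-1)^{l+m} l! S(m,l) (l+1)(l+2)^n for m ≥ 1 and B_n^{(0,0)} = 2^n. -/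
open Finset

/-- Multi-poly-Bernoulli number `B_n^{(0,-m)}`. -/
def B2right (n m : ℕ) : ℤ :=
  if m = 0 then 2 ^ n
  else ∑ l ∈ Finset.Icc 1 m,
    (-1 : ℤ) ^ (l + m) * (Nat.factorial l) * S2 m l * ((l : ℤ) + 1) * ((l : ℤ) + 2) ^ n

lemma S2_eq_zero : ∀ {n l : ℕ}, n < l → S2 n l = 0 := by
  intro n
  induction n with
  | zero => intro l h; cases l with
    | zero => omega
    | succ l => rfl
  | succ n ih =>
    intro l h
    cases l with
    | zero => omega
    | succ l =>
      show S2 n l + (l + 1) * S2 n (l + 1) = 0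
      rw [ih (by omega), ih (by omega)]
      ring

lemma S2_shift (n l : ℕ) :
    ∑ m ∈ range (n + 1), n.choose (m + 1) * S2 (m + 1) (l + 1) =
      ∑ m ∈ range (n + 1), n.choose m * S2 m (l + 1) := by
  have h1 := Finset.sum_range_succ' (fun j => n.choose j * S2 j (l + 1)) (n + 1)
  have h2 := Finset.sum_range_succ (fun j => n.choose j * S2 j (l + 1)) (n + 1)
  simp only [Nat.choose_succ_self, Nat.choose_zero_right, one_mul, zero_mul, add_zero,
    S2_eq_zero (Nat.succ_pos l)] at h1 h2
  rw [← h1, h2]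

lemma S2_one : ∀ n : ℕ, S2 (n + 1) 1 = 1 := by
  intro n
  induction n with
  | zero => rfl
  | succ n ih =>
    show S2 (n + 1) 0 + 1 * S2 (n + 1) 1 = 1
    rw [ih, show S2 (n + 1) 0 = 0 from rfl]

lemma stirling_binom : ∀ n l : ℕ, S2 (n + 1) (l + 1) = ∑ m ∈ range (n + 1), n.choose m * S2 m l := by
  intro n
  induction n with
  | zero => intro l; cases l <;> simp [S2]
  | succ n ih =>
    intro l
    rw [Finset.sum_range_succ' (fun m => (n + 1).choose m * S2 m l) (n + 1)]
    cases l with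
    | zero =>
      have hz : ∀ m : ℕ, S2 (m + 1) 0 = 0 := fun m => rfl
      simp only [hz, mul_zero, Finset.sum_const_zero, Nat.choose_zero_right, one_mul, zero_add]
      show S2 (n + 2) 1 = S2 0 0
      rw [S2_one]
      rfl
    | succ l =>
      have key2 : ∀ m : ℕ, S2 (m + 1) (l + 1) = S2 m l + (l + 1) * S2 m (l + 1) := fun m => rfl
      have hps : ∀ m : ℕ, (n + 1).choose (m + 1) = n.choose m + n.choose (m + 1) :=
        fun m => Nat.choose_succ_succ n m
      rw [show S2 (n + 2) (l + 1 + 1) = S2 (n + 1) (l + 1) + (l + 2) * S2 (n + 1) (l + 2) from rfl,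
        ih l, ih (l + 1)]
      have h0 : (n + 1).choose 0 * S2 0 (l + 1) = 0 := by
        simp [show S2 0 (l + 1) = 0 from rfl]
      rw [h0, add_zero]
      have expand : ∀ m, (n + 1).choose (m + 1) * S2 (m + 1) (l + 1) =
          n.choose m * S2 m l + (l + 1) * (n.choose m * S2 m (l + 1))
            + n.choose (m + 1) * S2 (m + 1) (l + 1) := by
        intro m
        rw [hps m, Nat.add_mul, key2 m]
        ring
      rw [Finset.sum_congr rfl (fun m _ => expand m), Finset.sum_add_distrib,
        Finset.sum_add_distrib, S2_shift, ← Finset.mul_sum]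
      ring

lemma B2right_eq (n m : ℕ) : B2right n m =
    ∑ l ∈ range (m + 1),
      (-1 : ℤ) ^ (l + m) * (Nat.factorial l) * S2 m l * ((l : ℤ) + 1) * ((l : ℤ) + 2) ^ n := by
  rcases m with _ | m
  · norm_num [B2right, show S2 0 0 = 1 from rfl]
  · rw [B2right, if_neg (Nat.succ_ne_zero m)]
    rw [Finset.sum_range_succ'
      (fun l => (-1 : ℤ) ^ (l + (m + 1)) * (Nat.factorial l) * S2 (m + 1) l * ((l : ℤ) + 1)
        * ((l : ℤ) + 2) ^ n) (m + 1)]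
    rw [show S2 (m + 1) 0 = 0 from rfl]
    rw [← Finset.Ico_add_one_right_eq_Icc, Finset.sum_Ico_eq_sum_range]
    simp only [Nat.add_sub_cancel, Nat.cast_zero, mul_zero, zero_mul, Nat.cast_ofNat,
      add_zero]
    apply Finset.sum_congr rfl
    intro i _
    rw [add_comm 1 i]

theorem stmt_14 (k n : ℕ) (hk : 1 ≤ k) :
    polyB n k =
      ∑ m ∈ Finset.range k,
        (-1 : ℤ) ^ (k - m - 1) * (Nat.choose (k - 1) m) * B2right n m := by
  obtain ⟨K, rfl⟩ : ∃ K, k = K + 1 := ⟨k - 1, by omega⟩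
  have hidx : ∀ m : ℕ, K + 1 - m - 1 = K - m := fun m => by omega
  -- rewrite the RHS into a double sum and swap
  have step1 : ∑ m ∈ Finset.range (K + 1),
      (-1 : ℤ) ^ (K + 1 - m - 1) * (Nat.choose (K + 1 - 1) m) * B2right n m
      = ∑ m ∈ Finset.Ico 0 (K + 1), ∑ l ∈ Finset.Ico 0 (m + 1),
          (-1 : ℤ) ^ (K - m) * (Nat.choose K m) *
            ((-1 : ℤ) ^ (l + m) * (Nat.factorial l) * S2 m l * ((l : ℤ) + 1)
              * ((l : ℤ) + 2) ^ n) := by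
    rw [Finset.range_eq_Ico]
    apply Finset.sum_congr rfl
    intro m _
    rw [hidx, Nat.add_sub_cancel, B2right_eq, Finset.mul_sum, Finset.range_eq_Ico]
  have step2 := (Finset.sum_Ico_Ico_comm 0 (K + 1) (fun l m =>
      (-1 : ℤ) ^ (K - m) * (Nat.choose K m) *
        ((-1 : ℤ) ^ (l + m) * (Nat.factorial l) * S2 m l * ((l : ℤ) + 1)
          * ((l : ℤ) + 2) ^ n))).symm
  rw [step1, step2]
  -- now both sides are single sums over l ∈ range (K+1)
  rw [polyB, ← Finset.Ico_add_one_right_eq_Icc, Finset.sum_Ico_eq_sum_range]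
  simp only [Nat.add_sub_cancel, Finset.range_eq_Ico]
  apply Finset.sum_congr rfl
  intro l hl
  rw [Finset.mem_Ico] at hl
  have hlK : l ≤ K := by omega
  -- compute the inner sum over m
  have inner : ∀ m ∈ Finset.Ico l (K + 1),
      (-1 : ℤ) ^ (K - m) * (Nat.choose K m) *
        ((-1 : ℤ) ^ (l + m) * (Nat.factorial l) * S2 m l * ((l : ℤ) + 1)
          * ((l : ℤ) + 2) ^ n)
      = ((-1 : ℤ) ^ (K + l) * (Nat.factorial l) * ((l : ℤ) + 1) * ((l : ℤ) + 2) ^ n)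
          * ((Nat.choose K m * S2 m l : ℕ) : ℤ) := by
    intro m hm
    rw [Finset.mem_Ico] at hm
    have hsgn : (-1 : ℤ) ^ (K - m) * (-1 : ℤ) ^ (l + m) = (-1 : ℤ) ^ (K + l) := by
      rw [← pow_add]
      congr 1
      omega
    push_cast
    rw [← hsgn]
    ring
  rw [Finset.sum_congr rfl inner, ← Finset.mul_sum, ← Nat.cast_sum]
  have hzero : ∑ m ∈ Finset.Ico 0 l, Nat.choose K m * S2 m l = 0 := by
    apply Finset.sum_eq_zero
    intro m hm
    rw [Finset.mem_Ico] at hm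
    rw [S2_eq_zero hm.2, mul_zero]
  have hsplit : ∑ m ∈ Finset.Ico l (K + 1), Nat.choose K m * S2 m l
      = ∑ m ∈ Finset.range (K + 1), Nat.choose K m * S2 m l := by
    rw [Finset.range_eq_Ico,
      ← Finset.sum_Ico_consecutive _ (Nat.zero_le l) (by omega : l ≤ K + 1), hzero, zero_add]
  rw [hsplit, ← stirling_binom K l]
  -- final per-term equality
  have hsgn2 : (-1 : ℤ) ^ (l + 1 + (K + 1)) = (-1 : ℤ) ^ (K + l) := by
    rw [show l + 1 + (K + 1) = K + l + 2 by omega, pow_add]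
    norm_num
  rw [add_comm 1 l, hsgn2]
  push_cast [Nat.factorial_succ]
  ring_nf
end
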